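/- Let N ≥ 1, σ > 0, V_min < V_max, let A be a finite set with at least two elements, and let Q : ℝ^N × A → ℝ be measurable in its first argument with V_min ≤ Q(x, a) ≤ V_max for all x, a. Define Q̃(s, a) := E_{Δ ~ N(0, σ²I_N)}[Q(s + Δ, a)] and fix a state s ∈ ℝ^N; assume V_min < Q̃(s′, a) < V_max for all s′ ∈ ℝ^N and a ∈ A. Let a₁ ∈ A satisfy Q̃(s, a₁) ≥ Q̃(s, a) for all a ∈ A, and let a₂ ∈ A \ {a₁} satisfy Q̃(s, a₂) ≥ Q̃(s, a) for all a ∈ A \ {a₁}. Set r := (σ/2)·(Φ⁻¹((Q̃(s, a₁) − V_min)/(V_max − V_min)) − Φ⁻¹((Q̃(s, a₂) − V_min)/(V_max − V_min))). Then for every perturbation δ ∈ ℝ^N with ‖δ‖₂ < r and every a ∈ A with a ≠ a₁, it holds that Q̃(s + δ, a₁) > Q̃(s + δ, a); in particular, the action with the highest smoothed value at s + δ is still a₁. -/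

import Mathlib

/-!
After rescaling to `[0, 1]`, the smoothed value `p(s)` of an action satisfies
`Φ⁻¹(p(s)) - ‖δ‖/σ ≤ Φ⁻¹(p(s + δ))`. By the Cameron–Martin formula, shifting the Gaussian
by `δ` reweights it by `exp(⟪δ, x⟫ - ‖δ‖²/2)` (for `σ = 1`), and by the Neyman–Pearson lemma the
`[0, 1]`-valued function of mean `p` whose shifted mean is smallest is the indicator of a
half-space orthogonal to `δ`; for a half-space both means are values of `Φ`.
Used at `s` for `a₁` and at `s + δ` with shift `-δ` for `a`, and combined with the monotonicity
of `Φ⁻¹`, the bound shows that a perturbation of norm less than `r` cannot close the gap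
`2r/σ` between the probits of the two best actions.
-/

open MeasureTheory ProbabilityTheory

/-- The centered Gaussian product measure `N(0, σ² I)` on Euclidean space. -/
noncomputable def gaussPi (ι : Type*) [Fintype ι] (σ : ℝ) :
    Measure (EuclideanSpace ℝ ι) :=
  (Measure.pi fun _ : ι => gaussianReal 0 ⟨σ ^ 2, sq_nonneg σ⟩).map
    (MeasurableEquiv.toLp 2 (ι → ℝ))

/-- The cumulative distribution function `Φ` of the standard one-dimensional Gaussian. -/
noncomputable def stdGaussianCDF (x : ℝ) : ℝ :=
  (gaussianReal 0 1 (Set.Iic x)).toReal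

/-- The inverse `Φ⁻¹` of the standard Gaussian CDF (on `(0,1)`). -/
noncomputable def probit : ℝ → ℝ :=
  Function.invFun stdGaussianCDF

open Real Set
open scoped ENNReal NNReal RealInnerProductSpace

namespace MeasureTheory

lemma Measure.pi_withDensity {ι : Type*} [Fintype ι] {α : ι → Type*}
    [∀ i, MeasurableSpace (α i)] (μ : ∀ i, Measure (α i)) [∀ i, IsProbabilityMeasure (μ i)]
    {f : ∀ i, α i → ℝ≥0∞} (hf : ∀ i, Measurable (f i))
    [∀ i, SigmaFinite ((μ i).withDensity (f i))] :
    Measure.pi (fun i => (μ i).withDensity (f i)) =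
      (Measure.pi μ).withDensity fun x => ∏ i, f i (x i) := by
  refine Measure.pi_eq fun s hs => ?_
  have hind : (univ.pi s).indicator (fun x => ∏ i, f i (x i)) =
      fun x => ∏ i, (s i).indicator (f i) (x i) := by
    ext x
    by_cases hx : x ∈ univ.pi s
    · rw [indicator_of_mem hx]
      exact Finset.prod_congr rfl fun i _ => (indicator_of_mem (hx i (mem_univ i)) _).symm
    · obtain ⟨i, -, hi⟩ := not_forall₂.1 hx
      rw [indicator_of_notMem hx,
        Finset.prod_eq_zero (Finset.mem_univ i) (indicator_of_notMem hi _)]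
  rw [withDensity_apply _ (.univ_pi hs), ← lintegral_indicator (.univ_pi hs), hind,
    lintegral_prod_eq_prod_lintegral_of_indepFun _ _
      (iIndepFun_pi fun i => ((hf i).indicator (hs i)).aemeasurable)
      fun i => ((hf i).indicator (hs i)).comp (measurable_pi_apply i)]
  refine Finset.prod_congr rfl fun i _ => ?_
  rw [withDensity_apply _ (hs i), ← lintegral_indicator (hs i),
    ← (measurePreserving_eval μ i).lintegral_comp ((hf i).indicator (hs i))]

lemma Measure.map_withDensity_comp {α β : Type*} [MeasurableSpace α]
    [MeasurableSpace β] {T : α → β} (hT : Measurable T) (μ : Measure α) {g : β → ℝ≥0∞}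
    (hg : Measurable g) : (μ.withDensity (g ∘ T)).map T = (μ.map T).withDensity g := by
  ext s hs
  rw [Measure.map_apply hT hs, withDensity_apply _ (hT hs), withDensity_apply _ hs,
    setLIntegral_map hs hg hT]
  rfl

theorem setLIntegral_le_lintegral_mul_of_neymanPearson {α : Type*}
    [MeasurableSpace α] (μ : Measure α) [IsFiniteMeasure μ] {F L : α → ℝ≥0∞}
    (hF : Measurable F) (hL : Measurable L) (hF1 : ∀ x, F x ≤ 1) {S : Set α}
    (hS : MeasurableSet S) {k : ℝ≥0∞} (hk : k ≠ ∞) (hLS : ∀ x ∈ S, L x ≤ k)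
    (hLSc : ∀ x ∉ S, k ≤ L x) (hFS : ∫⁻ x, F x ∂μ = μ S) :
    ∫⁻ x in S, L x ∂μ ≤ ∫⁻ x, F x * L x ∂μ := by
  have key : ∀ x, S.indicator L x + k * F x ≤ F x * L x + S.indicator (fun _ => k) x := by
    intro x
    by_cases hx : x ∈ S
    · rw [indicator_of_mem hx, indicator_of_mem hx]
      calc L x + k * F x = L x * (1 - F x) + F x * L x + k * F x := by
            rw [mul_comm (F x), ← mul_add, tsub_add_cancel_of_le (hF1 x), mul_one]
        _ ≤ k * (1 - F x) + F x * L x + k * F x := by gcongr; exact hLS x hx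
        _ = F x * L x + k := by
            rw [add_comm (k * _), add_assoc, ← mul_add, tsub_add_cancel_of_le (hF1 x), mul_one]
    · rw [indicator_of_notMem hx, indicator_of_notMem hx, zero_add, add_zero, mul_comm (F x)]
      gcongr
      exact hLSc x hx
  have h := lintegral_mono (μ := μ) key
  rw [lintegral_add_left (hL.indicator hS), lintegral_add_left (f := fun x => F x * L x)
    (hF.mul hL), lintegral_indicator hS, lintegral_const_mul k hF, hFS,
    lintegral_indicator_const hS] at h
  exact (ENNReal.add_le_add_iff_right (ENNReal.mul_ne_top hk (measure_ne_top _ _))).1 h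

end MeasureTheory

namespace ProbabilityTheory

lemma continuous_cdf (μ : Measure ℝ) [IsProbabilityMeasure μ] [NullSingletonClass μ] :
    Continuous (cdf μ) := by
  refine continuous_iff_continuousAt.2 fun a => ?_
  rw [(monotone_cdf μ).continuousAt_iff_leftLim_eq_rightLim, (cdf μ).rightLim_eq]
  have h := (cdf μ).measure_singleton a
  rw [measure_cdf, measure_singleton, eq_comm, ENNReal.ofReal_eq_zero, sub_nonpos] at h
  exact le_antisymm (Monotone.leftLim_le (monotone_cdf μ) le_rfl) h

instance (μ : ℝ) : NullSingletonClass (gaussianReal μ 1) :=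
  ⟨fun _ => gaussianReal_absolutelyContinuous μ one_ne_zero Real.volume_singleton⟩

lemma gaussianReal_Ioc_pos (μ : ℝ) {v : ℝ≥0} (hv : v ≠ 0) {a b : ℝ} (hab : a < b) :
    0 < gaussianReal μ v (Ioc a b) := by
  rw [pos_iff_ne_zero, gaussianReal_of_var_ne_zero μ hv, ne_eq,
    withDensity_apply_eq_zero' (measurable_gaussianPDF μ v).aemeasurable]
  have hsupp : {x | gaussianPDF μ v x ≠ 0} = univ :=
    eq_univ_of_forall fun x => (gaussianPDF_pos μ hv x).ne'
  simp [hsupp, hab]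

lemma gaussianReal_eq_withDensity_exp (m : ℝ) :
    gaussianReal m 1 =
      (gaussianReal 0 1).withDensity fun x => ENNReal.ofReal (exp (m * x - m ^ 2 / 2)) := by
  rw [gaussianReal_of_var_ne_zero _ one_ne_zero, gaussianReal_of_var_ne_zero _ one_ne_zero,
    ← withDensity_mul _ (measurable_gaussianPDF _ _) (by fun_prop)]
  congr 1
  ext x
  rw [Pi.mul_apply, gaussianPDF, gaussianPDF, ← ENNReal.ofReal_mul (gaussianPDFReal_nonneg _ _ _),
    gaussianPDFReal, gaussianPDFReal, mul_assoc (_⁻¹), ← Real.exp_add]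
  congr 3
  push_cast
  ring

variable {E : Type*} [NormedAddCommGroup E] [InnerProductSpace ℝ E] [FiniteDimensional ℝ E]
  [MeasurableSpace E] [BorelSpace E]

theorem stdGaussian_map_const_add (δ : E) :
    (stdGaussian E).map (δ + ·) =
      (stdGaussian E).withDensity fun x => ENNReal.ofReal (exp (⟪δ, x⟫ - ‖δ‖ ^ 2 / 2)) := by
  set b := stdOrthonormalBasis ℝ E
  set T : (Fin (Module.finrank ℝ E) → ℝ) → E := fun x => ∑ i, x i • b i
  have hT : Measurable T := by fun_prop
  set d : Fin (Module.finrank ℝ E) → ℝ := fun i => ⟪b i, δ⟫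
  have hshift : (δ + ·) ∘ T = T ∘ fun x i => d i + x i := by
    ext x
    simp [T, d, add_smul, Finset.sum_add_distrib, b.sum_repr']
  have (i : Fin (Module.finrank ℝ E)) : SigmaFinite ((gaussianReal 0 1).withDensity
      fun x => ENNReal.ofReal (exp (d i * x - d i ^ 2 / 2))) := by
    rw [← gaussianReal_eq_withDensity_exp]; infer_instance
  have hpi : (Measure.pi fun _ => gaussianReal 0 1).map (fun x i => d i + x i) =
      (Measure.pi fun _ => gaussianReal 0 1).withDensity
        fun x => ∏ i, ENNReal.ofReal (exp (d i * x i - d i ^ 2 / 2)) := by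
    rw [Measure.pi_map_pi fun _ => by fun_prop, ←
      Measure.pi_withDensity _ (f := fun i x => ENNReal.ofReal (exp (d i * x - d i ^ 2 / 2)))
        fun _ => by fun_prop]
    congr with i : 1
    rw [gaussianReal_map_const_add, zero_add, gaussianReal_eq_withDensity_exp]
  have hdens : (fun x => ∏ i, ENNReal.ofReal (exp (d i * x i - d i ^ 2 / 2))) =
      (fun y => ENNReal.ofReal (exp (⟪δ, y⟫ - ‖δ‖ ^ 2 / 2))) ∘ T := by
    ext x
    rw [← ENNReal.ofReal_prod_of_nonneg fun _ _ => (exp_pos _).le, ← exp_sum,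
      Finset.sum_sub_distrib, ← Finset.sum_div, b.sum_sq_inner_right]
    simp [T, d, inner_sum, inner_smul_right, real_inner_comm, mul_comm]
  rw [stdGaussian, Measure.map_map (by fun_prop) hT, hshift, ← Measure.map_map hT (by fun_prop),
    hpi, hdens, Measure.map_withDensity_comp hT _ (by fun_prop)]

lemma stdGaussian_map_inner (v : E) :
    (stdGaussian E).map (fun x => ⟪v, x⟫) = gaussianReal 0 (‖v‖ ^ 2).toNNReal := by
  have h := IsGaussian.map_eq_gaussianReal (μ := stdGaussian E) (innerSL ℝ v)
  rwa [integral_strongDual_stdGaussian, variance_dual_stdGaussian, innerSL_apply_norm] at h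

theorem stdGaussian_map_const_add_apply_le_lintegral {F : E → ℝ≥0∞} (hF : Measurable F)
    (hF1 : ∀ x, F x ≤ 1) (δ : E) (c : ℝ)
    (hFS : ∫⁻ x, F x ∂stdGaussian E = stdGaussian E {x | ⟪δ, x⟫ ≤ c}) :
    (stdGaussian E).map (δ + ·) {x | ⟪δ, x⟫ ≤ c} ≤ ∫⁻ x, F x ∂(stdGaussian E).map (δ + ·) := by
  set L : E → ℝ≥0∞ := fun x => ENNReal.ofReal (exp (⟪δ, x⟫ - ‖δ‖ ^ 2 / 2))
  have hL : Measurable L := by fun_prop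
  have hS : MeasurableSet {x | ⟪δ, x⟫ ≤ c} := measurableSet_le (by fun_prop) (by fun_prop)
  rw [stdGaussian_map_const_add, withDensity_apply _ hS,
    lintegral_withDensity_eq_lintegral_mul _ hL hF]
  simp_rw [Pi.mul_apply, mul_comm (L _)]
  -- `L` is an increasing function of `⟪δ, x⟫`, so the half-space is a sublevel set of `L`.
  refine setLIntegral_le_lintegral_mul_of_neymanPearson _ hF hL hF1 hS
    (k := ENNReal.ofReal (exp (c - ‖δ‖ ^ 2 / 2))) ENNReal.ofReal_ne_top
    (fun x (hx : ⟪δ, x⟫ ≤ c) => ENNReal.ofReal_le_ofReal (exp_le_exp.2 (by linarith)))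
    (fun x (hx : ¬⟪δ, x⟫ ≤ c) =>
      ENNReal.ofReal_le_ofReal (exp_le_exp.2 (by linarith [not_le.1 hx])))
    hFS

end ProbabilityTheory

lemma stdGaussianCDF_eq_cdf : stdGaussianCDF = cdf (gaussianReal 0 1) := by
  ext x
  rw [cdf_eq_real]
  rfl

lemma continuous_stdGaussianCDF : Continuous stdGaussianCDF :=
  stdGaussianCDF_eq_cdf ▸ continuous_cdf _

lemma strictMono_stdGaussianCDF : StrictMono stdGaussianCDF := by
  intro a b hab
  rw [stdGaussianCDF_eq_cdf, cdf_eq_real, cdf_eq_real, ← Iic_union_Ioc_eq_Iic hab.le,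
    measureReal_union (Iic_disjoint_Ioc le_rfl) measurableSet_Ioc, lt_add_iff_pos_right]
  exact ENNReal.toReal_pos (gaussianReal_Ioc_pos 0 one_ne_zero hab).ne' (measure_ne_top _ _)

lemma stdGaussianCDF_probit {p : ℝ} (hp : p ∈ Ioo 0 1) : stdGaussianCDF (probit p) = p := by
  refine Function.invFun_eq (mem_range_of_exists_le_of_exists_ge continuous_stdGaussianCDF ?_ ?_)
  · rw [stdGaussianCDF_eq_cdf]
    exact ((tendsto_cdf_atBot _).eventually (ge_mem_nhds hp.1)).exists
  · rw [stdGaussianCDF_eq_cdf]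
    exact ((tendsto_cdf_atTop _).eventually (le_mem_nhds hp.2)).exists

lemma le_probit_iff {x p : ℝ} (hp : p ∈ Ioo 0 1) : x ≤ probit p ↔ stdGaussianCDF x ≤ p := by
  conv_rhs => rw [← stdGaussianCDF_probit hp]
  exact strictMono_stdGaussianCDF.le_iff_le.symm

lemma probit_lt_probit_iff {p q : ℝ} (hp : p ∈ Ioo 0 1) (hq : q ∈ Ioo 0 1) :
    probit p < probit q ↔ p < q := by
  conv_rhs => rw [← stdGaussianCDF_probit hp, ← stdGaussianCDF_probit hq]
  exact strictMono_stdGaussianCDF.lt_iff_lt.symm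

lemma probit_le_probit_iff {p q : ℝ} (hp : p ∈ Ioo 0 1) (hq : q ∈ Ioo 0 1) :
    probit p ≤ probit q ↔ p ≤ q := by
  conv_rhs => rw [← stdGaussianCDF_probit hp, ← stdGaussianCDF_probit hq]
  exact strictMono_stdGaussianCDF.le_iff_le.symm

section StdGaussian

variable {E : Type*} [NormedAddCommGroup E] [InnerProductSpace ℝ E] [FiniteDimensional ℝ E]
  [MeasurableSpace E] [BorelSpace E]

lemma stdGaussian_setOf_inner_le {u : E} (hu : u ≠ 0) (c : ℝ) :
    stdGaussian E {x | ⟪u, x⟫ ≤ c} = ENNReal.ofReal (stdGaussianCDF (c / ‖u‖)) := by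
  have hu' : 0 < ‖u‖ := norm_pos_iff.2 hu
  have hscale : gaussianReal 0 (‖u‖ ^ 2).toNNReal = (gaussianReal 0 1).map (‖u‖ * ·) := by
    rw [gaussianReal_map_const_mul, mul_zero, mul_one]
    congr
    exact Real.toNNReal_of_nonneg (sq_nonneg _)
  rw [show {x | ⟪u, x⟫ ≤ c} = (fun x => ⟪u, x⟫) ⁻¹' Iic c from rfl,
    ← Measure.map_apply (by fun_prop) measurableSet_Iic, stdGaussian_map_inner, hscale,
    Measure.map_apply (by fun_prop) measurableSet_Iic, stdGaussianCDF_eq_cdf, ofReal_cdf]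
  congr 1
  ext t
  simp [le_div_iff₀ hu', mul_comm]

theorem stdGaussianCDF_probit_sub_norm_le {f : E → ℝ} (hf : Measurable f)
    (hf01 : ∀ x, f x ∈ Icc 0 1) (hp : ∫ x, f x ∂stdGaussian E ∈ Ioo 0 1) (δ : E) :
    stdGaussianCDF (probit (∫ x, f x ∂stdGaussian E) - ‖δ‖) ≤ ∫ x, f (δ + x) ∂stdGaussian E := by
  set γ := stdGaussian E
  rcases eq_or_ne δ 0 with rfl | hδ
  · simp [stdGaussianCDF_probit hp]
  have hδ' : 0 < ‖δ‖ := norm_pos_iff.2 hδ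
  set t := probit (∫ x, f x ∂γ)
  have hint {g : E → ℝ} (hg : Measurable g) (hg01 : ∀ x, g x ∈ Icc 0 1) :
      ENNReal.ofReal (∫ x, g x ∂γ) = ∫⁻ x, ENNReal.ofReal (g x) ∂γ :=
    ofReal_integral_eq_lintegral_ofReal (.of_mem_Icc 0 1 hg.aemeasurable (.of_forall hg01))
      (.of_forall fun x => (hg01 x).1)
  have hγS : ∫⁻ x, ENNReal.ofReal (f x) ∂γ = γ {x | ⟪δ, x⟫ ≤ ‖δ‖ * t} := by
    rw [← hint hf hf01, stdGaussian_setOf_inner_le hδ, mul_div_cancel_left₀ _ hδ'.ne',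
      stdGaussianCDF_probit hp]
  have hshiftS : γ.map (δ + ·) {x | ⟪δ, x⟫ ≤ ‖δ‖ * t} =
      ENNReal.ofReal (stdGaussianCDF (t - ‖δ‖)) := by
    have hpre : (δ + ·) ⁻¹' {x | ⟪δ, x⟫ ≤ ‖δ‖ * t} = {x | ⟪δ, x⟫ ≤ ‖δ‖ * (t - ‖δ‖)} := by
      ext x
      simp only [mem_preimage, mem_ofPred_eq, inner_add_right, real_inner_self_eq_norm_sq]
      constructor <;> intro h <;> linarith
    rw [Measure.map_apply (by fun_prop) (measurableSet_le (by fun_prop) (by fun_prop)), hpre,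
      stdGaussian_setOf_inner_le hδ, mul_div_cancel_left₀ _ hδ'.ne']
  have key := stdGaussian_map_const_add_apply_le_lintegral (by fun_prop)
    (fun x => ENNReal.ofReal_le_one.2 (hf01 x).2) δ _ hγS
  rw [hshiftS, lintegral_map (by fun_prop) (by fun_prop),
    ← hint (g := fun x => f (δ + x)) (by fun_prop) fun x => hf01 _] at key
  exact (ENNReal.ofReal_le_ofReal_iff (integral_nonneg fun x => (hf01 _).1)).1 key

theorem probit_sub_norm_le_probit_integral_add {f : E → ℝ} (hf : Measurable f)
    (hf01 : ∀ x, f x ∈ Icc 0 1) {δ : E} (hp : ∫ x, f x ∂stdGaussian E ∈ Ioo 0 1)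
    (hpδ : ∫ x, f (δ + x) ∂stdGaussian E ∈ Ioo 0 1) :
    probit (∫ x, f x ∂stdGaussian E) - ‖δ‖ ≤ probit (∫ x, f (δ + x) ∂stdGaussian E) :=
  (le_probit_iff hpδ).2 (stdGaussianCDF_probit_sub_norm_le hf hf01 hp δ)

end StdGaussian

lemma gaussPi_eq_map_smul_stdGaussian (ι : Type*) [Fintype ι] (σ : ℝ) :
    gaussPi ι σ = (stdGaussian (EuclideanSpace ℝ ι)).map (σ • ·) := by
  rw [gaussPi, ← map_pi_eq_stdGaussian, Measure.map_map (by fun_prop) (by fun_prop)]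
  rw [show (σ • ·) ∘ WithLp.toLp 2 = WithLp.toLp 2 ∘ fun (x : ι → ℝ) i => σ * x i from rfl,
    ← Measure.map_map (by fun_prop) (by fun_prop), Measure.pi_map_pi fun _ => by fun_prop]
  simp_rw [gaussianReal_map_const_mul, mul_zero, mul_one]
  rfl

instance (ι : Type*) [Fintype ι] (σ : ℝ) : IsProbabilityMeasure (gaussPi ι σ) := by
  rw [gaussPi_eq_map_smul_stdGaussian]
  exact Measure.isProbabilityMeasure_map (by fun_prop)

theorem probit_integral_sub_le {ι : Type*} [Fintype ι] {σ : ℝ} (hσ : 0 < σ)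
    {f : EuclideanSpace ℝ ι → ℝ} (hf : Measurable f) (hf01 : ∀ x, f x ∈ Icc 0 1)
    {s δ : EuclideanSpace ℝ ι} (hs : ∫ Δ, f (s + Δ) ∂gaussPi ι σ ∈ Ioo 0 1)
    (hsδ : ∫ Δ, f (s + δ + Δ) ∂gaussPi ι σ ∈ Ioo 0 1) :
    probit (∫ Δ, f (s + Δ) ∂gaussPi ι σ) - ‖δ‖ / σ ≤
      probit (∫ Δ, f (s + δ + Δ) ∂gaussPi ι σ) := by
  set g := fun y => f (s + σ • y)
  have hrescale (t : EuclideanSpace ℝ ι) :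
      ∫ Δ, f (s + t + Δ) ∂gaussPi ι σ = ∫ y, g (σ⁻¹ • t + y) ∂stdGaussian _ := by
    rw [gaussPi_eq_map_smul_stdGaussian,
      integral_map (f := fun Δ => f (s + t + Δ)) (by fun_prop)
        (hf.comp (measurable_const_add (s + t))).aestronglyMeasurable]
    simp_rw [g, smul_add, smul_inv_smul₀ hσ.ne', add_assoc]
  have h0 : ∫ Δ, f (s + Δ) ∂gaussPi ι σ = ∫ y, g y ∂stdGaussian _ := by
    simpa using hrescale 0
  have hnorm : ‖σ⁻¹ • δ‖ = ‖δ‖ / σ := by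
    rw [norm_smul, norm_inv, Real.norm_of_nonneg hσ.le, inv_mul_eq_div]
  rw [h0] at hs ⊢
  rw [hrescale] at hsδ ⊢
  rw [← hnorm]
  exact probit_sub_norm_le_probit_integral_add (by fun_prop) (fun _ => hf01 _) hs hsδ

theorem probit_normalized_integral_sub_le {ι : Type*} [Fintype ι] {σ : ℝ} (hσ : 0 < σ)
    {m M : ℝ} (hmM : m < M) {q : EuclideanSpace ℝ ι → ℝ} (hq : Measurable q)
    (hqb : ∀ x, q x ∈ Icc m M) {s δ : EuclideanSpace ℝ ι}
    (hs : ∫ Δ, q (s + Δ) ∂gaussPi ι σ ∈ Ioo m M)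
    (hsδ : ∫ Δ, q (s + δ + Δ) ∂gaussPi ι σ ∈ Ioo m M) :
    probit ((∫ Δ, q (s + Δ) ∂gaussPi ι σ - m) / (M - m)) - ‖δ‖ / σ ≤
      probit ((∫ Δ, q (s + δ + Δ) ∂gaussPi ι σ - m) / (M - m)) := by
  have hM : 0 < M - m := sub_pos.2 hmM
  have hnormalize (t : EuclideanSpace ℝ ι) : (∫ Δ, q (t + Δ) ∂gaussPi ι σ - m) / (M - m) =
      ∫ Δ, (q (t + Δ) - m) / (M - m) ∂gaussPi ι σ := by
    rw [integral_div, integral_sub _ (integrable_const _), integral_const, probReal_univ, one_smul]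
    exact .of_mem_Icc m M (hq.comp (measurable_const_add t)).aemeasurable
      (.of_forall fun _ => hqb _)
  have hunit {y : ℝ} (hy : y ∈ Ioo m M) : (y - m) / (M - m) ∈ Ioo 0 1 :=
    ⟨div_pos (sub_pos.2 hy.1) hM, (div_lt_one hM).2 (by linarith [hy.2])⟩
  have h₁ := hunit hs
  have h₂ := hunit hsδ
  rw [hnormalize] at h₁ h₂ ⊢
  rw [hnormalize]
  exact probit_integral_sub_le hσ (by fun_prop)
    (fun x => ⟨div_nonneg (sub_nonneg.2 (hqb x).1) hM.le,
      (div_le_one hM).2 (sub_le_sub_right (hqb x).2 m)⟩) h₁ h₂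

theorem certified_radius_per_state_action_general
    (N : ℕ) (σ : ℝ) (hσ : 0 < σ)
    (Vmin Vmax : ℝ) (hV : Vmin < Vmax)
    (A : Type*)
    (Q : EuclideanSpace ℝ (Fin N) → A → ℝ)
    (hQmeas : ∀ a, Measurable fun x => Q x a)
    (hbd : ∀ x a, Vmin ≤ Q x a ∧ Q x a ≤ Vmax)
    (Qt : EuclideanSpace ℝ (Fin N) → A → ℝ)
    (hQt : ∀ s a, Qt s a = ∫ Δ, Q (s + Δ) a ∂(gaussPi (Fin N) σ))
    (s : EuclideanSpace ℝ (Fin N))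
    (hrange : ∀ s' a, Vmin < Qt s' a ∧ Qt s' a < Vmax)
    (a₁ a₂ : A)
    (ha₂top : ∀ a, a ≠ a₁ → Qt s a ≤ Qt s a₂)
    (r : ℝ)
    (hr : r = σ / 2 * (probit ((Qt s a₁ - Vmin) / (Vmax - Vmin)) -
      probit ((Qt s a₂ - Vmin) / (Vmax - Vmin)))) :
    ∀ δ : EuclideanSpace ℝ (Fin N), ‖δ‖ < r →
      ∀ a, a ≠ a₁ → Qt (s + δ) a < Qt (s + δ) a₁ := by
  intro δ hδ a ha
  set P : EuclideanSpace ℝ (Fin N) → A → ℝ := fun s' b => (Qt s' b - Vmin) / (Vmax - Vmin)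
  have hP01 (s' : EuclideanSpace ℝ (Fin N)) (b : A) : P s' b ∈ Ioo 0 1 :=
    ⟨div_pos (by linarith [hrange s' b]) (sub_pos.2 hV),
      (div_lt_one (sub_pos.2 hV)).2 (by linarith [hrange s' b])⟩
  have hlip (b : A) (s' δ' : EuclideanSpace ℝ (Fin N)) :
      probit (P s' b) - ‖δ'‖ / σ ≤ probit (P (s' + δ') b) := by
    simp only [P, hQt] at hrange ⊢
    exact probit_normalized_integral_sub_le hσ hV (hQmeas b) (fun x => hbd x b)
      (hrange s' b) (hrange (s' + δ') b)
  have hup := hlip a (s + δ) (-δ)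
  rw [norm_neg, add_neg_cancel_right] at hup
  have hlow := hlip a₁ s δ
  have hmono : probit (P s a) ≤ probit (P s a₂) :=
    (probit_le_probit_iff (hP01 s a) (hP01 s a₂)).2
      (div_le_div_of_nonneg_right (sub_le_sub_right (ha₂top a ha) _) (sub_pos.2 hV).le)
  have hgap : ‖δ‖ / σ < (probit (P s a₁) - probit (P s a₂)) / 2 := by
    rw [div_lt_iff₀ hσ]
    linarith
  have hP' : P (s + δ) a < P (s + δ) a₁ :=
    (probit_lt_probit_iff (hP01 _ _) (hP01 _ _)).1 (by linarith)
  linarith [(div_lt_div_iff_of_pos_right (sub_pos.2 hV)).1 hP']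

/-- Certified radius for the per-state action: within the radius
`r = (σ/2)(Φ⁻¹((Q̃(s,a₁)−Vmin)/(Vmax−Vmin)) − Φ⁻¹((Q̃(s,a₂)−Vmin)/(Vmax−Vmin)))`,
the smoothed value of the top action `a₁` stays strictly above that of every
other action, so the top action does not change. -/
theorem certified_radius_per_state_action
    (N : ℕ) (hN : 1 ≤ N) (σ : ℝ) (hσ : 0 < σ)
    (Vmin Vmax : ℝ) (hV : Vmin < Vmax)
    (A : Type*) [Fintype A] (hA : 2 ≤ Fintype.card A)
    (Q : EuclideanSpace ℝ (Fin N) → A → ℝ)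
    (hQmeas : ∀ a, Measurable fun x => Q x a)
    (hbd : ∀ x a, Vmin ≤ Q x a ∧ Q x a ≤ Vmax)
    (Qt : EuclideanSpace ℝ (Fin N) → A → ℝ)
    (hQt : ∀ s a, Qt s a = ∫ Δ, Q (s + Δ) a ∂(gaussPi (Fin N) σ))
    (s : EuclideanSpace ℝ (Fin N))
    (hrange : ∀ s' a, Vmin < Qt s' a ∧ Qt s' a < Vmax)
    (a₁ a₂ : A) (ha₂ne : a₂ ≠ a₁)
    (ha₁top : ∀ a, Qt s a ≤ Qt s a₁)
    (ha₂top : ∀ a, a ≠ a₁ → Qt s a ≤ Qt s a₂)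
    (r : ℝ)
    (hr : r = σ / 2 * (probit ((Qt s a₁ - Vmin) / (Vmax - Vmin)) -
      probit ((Qt s a₂ - Vmin) / (Vmax - Vmin)))) :
    ∀ δ : EuclideanSpace ℝ (Fin N), ‖δ‖ < r →
      ∀ a, a ≠ a₁ → Qt (s + δ) a < Qt (s + δ) a₁ :=
  certified_radius_per_state_action_general N σ hσ Vmin Vmax hV A Q hQmeas hbd Qt hQt s hrange a₁ a₂
    ha₂top r hr
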